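/- arXiv:2402.02322 — 7 statements merged into one kernel-verified Lean document; each statement's English description precedes it below -/
import Mathlib

section
/- Let λ₀ > 0, λ₁ ≥ 0, λ₂ > 0 and τ ∈ ℝ, and define h(u) = τ·u + λ₀·𝟙{u ≠ 0} + λ₁|u| + λ₂u² for u ∈ ℝ. If |τ| ≤ 2√(λ₀λ₂) + λ₁ then inf_{u ∈ ℝ} h(u) = 0, and if |τ| ≥ 2√(λ₀λ₂) + λ₁ then inf_{u ∈ ℝ} h(u) = λ₀ − (|τ| − λ₁)²/(4λ₂). -/
/-!
Away from `u = 0`, choosing the sign of `u` against `τ` reduces `h` to the one-variable quadratic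
`l0 - (|τ| - l1) t + l2 t²` in `t = |u|`, which is the best that sign can do. When
`|τ| - l1 ≤ 2 √(l0 l2)` this quadratic is nonnegative by AM-GM, so `h(0) = 0` is the minimum;
otherwise its vertex value `l0 - (|τ| - l1)² / (4 l2)` is negative and is attained.
-/

open Real

noncomputable def penalizedQuadratic (l0 l1 l2 τ u : ℝ) : ℝ :=
  τ * u + (if u ≠ 0 then l0 else 0) + l1 * |u| + l2 * u ^ 2

section Quadratic

variable {l0 l2 a : ℝ}

theorem sub_sq_div_le_quadratic (hl2 : 0 < l2) (t : ℝ) :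
    l0 - a ^ 2 / (4 * l2) ≤ l0 - a * t + l2 * t ^ 2 := by
  have key : l0 - a * t + l2 * t ^ 2 - (l0 - a ^ 2 / (4 * l2)) = (2 * l2 * t - a) ^ 2 / (4 * l2) := by
    field_simp
    ring
  have : 0 ≤ (2 * l2 * t - a) ^ 2 / (4 * l2) := by positivity
  linarith

theorem quadratic_at_vertex (hl2 : 0 < l2) :
    l0 - a * (a / (2 * l2)) + l2 * (a / (2 * l2)) ^ 2 = l0 - a ^ 2 / (4 * l2) := by
  field_simp
  ring

theorem quadratic_nonneg_of_le_two_sqrt (hl0 : 0 ≤ l0) (hl2 : 0 ≤ l2)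
    (ha : a ≤ 2 * √(l0 * l2)) {t : ℝ} (ht : 0 ≤ t) : 0 ≤ l0 - a * t + l2 * t ^ 2 := by
  have amgm : 2 * √(l0 * l2) * t ≤ l0 + l2 * t ^ 2 := by
    rw [sqrt_mul hl0]
    nlinarith [sq_nonneg (√l0 - √l2 * t), sq_sqrt hl0, sq_sqrt hl2]
  nlinarith [mul_le_mul_of_nonneg_right ha ht]

theorem sub_sq_div_nonpos_of_two_sqrt_le (hl0 : 0 ≤ l0) (hl2 : 0 < l2)
    (ha : 2 * √(l0 * l2) ≤ a) : l0 - a ^ 2 / (4 * l2) ≤ 0 := by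
  have hsq : 4 * (l0 * l2) ≤ a ^ 2 := by
    have := pow_le_pow_left₀ (by positivity) ha 2
    rw [mul_pow, sq_sqrt (by positivity)] at this
    linarith
  rw [sub_nonpos, le_div_iff₀ (by positivity)]
  linarith

end Quadratic

theorem exists_abs_eq_and_mul_eq_neg (τ : ℝ) {t : ℝ} (ht : 0 ≤ t) :
    ∃ u : ℝ, |u| = t ∧ τ * u = -(|τ| * t) := by
  rcases le_or_gt 0 τ with hτ | hτ
  · exact ⟨-t, by rw [abs_neg, abs_of_nonneg ht], by rw [abs_of_nonneg hτ]; ring⟩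
  · exact ⟨t, abs_of_nonneg ht, by rw [abs_of_neg hτ]; ring⟩

namespace penalizedQuadratic

variable {l0 l1 l2 τ : ℝ}

@[simp]
theorem apply_zero : penalizedQuadratic l0 l1 l2 τ 0 = 0 := by
  simp [penalizedQuadratic]

theorem apply_of_ne_zero {u : ℝ} (hu : u ≠ 0) :
    penalizedQuadratic l0 l1 l2 τ u =
      l0 - (|τ| - l1) * |u| + l2 * |u| ^ 2 + (τ * u + |τ| * |u|) := by
  rw [penalizedQuadratic, if_pos hu, sq_abs]
  ring

theorem quadratic_le {u : ℝ} (hu : u ≠ 0) :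
    l0 - (|τ| - l1) * |u| + l2 * |u| ^ 2 ≤ penalizedQuadratic l0 l1 l2 τ u := by
  have : -(|τ| * |u|) ≤ τ * u := abs_mul τ u ▸ neg_abs_le (τ * u)
  rw [apply_of_ne_zero hu]
  linarith

theorem mem_lowerBounds_range {m : ℝ} (hm : m ≤ 0)
    (hq : ∀ t : ℝ, 0 < t → m ≤ l0 - (|τ| - l1) * t + l2 * t ^ 2) :
    m ∈ lowerBounds (Set.range (penalizedQuadratic l0 l1 l2 τ)) := by
  rintro _ ⟨u, rfl⟩
  rcases eq_or_ne u 0 with rfl | hu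
  · simpa using hm
  · exact (hq _ (abs_pos.mpr hu)).trans (quadratic_le hu)

theorem isLeast_range_zero (hl0 : 0 ≤ l0) (hl2 : 0 ≤ l2) (hτ : |τ| ≤ 2 * √(l0 * l2) + l1) :
    IsLeast (Set.range (penalizedQuadratic l0 l1 l2 τ)) 0 :=
  ⟨⟨0, apply_zero⟩, mem_lowerBounds_range le_rfl fun _ ht =>
    quadratic_nonneg_of_le_two_sqrt hl0 hl2 (by linarith) ht.le⟩

theorem isLeast_range_vertex (hl0 : 0 < l0) (hl2 : 0 < l2) (hτ : 2 * √(l0 * l2) + l1 ≤ |τ|) :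
    IsLeast (Set.range (penalizedQuadratic l0 l1 l2 τ)) (l0 - (|τ| - l1) ^ 2 / (4 * l2)) := by
  have ha : 2 * √(l0 * l2) ≤ |τ| - l1 := by linarith
  have ha_pos : 0 < |τ| - l1 := by
    have : 0 < √(l0 * l2) := sqrt_pos.mpr (by positivity)
    linarith
  obtain ⟨u, hu_abs, hτu⟩ :=
    exists_abs_eq_and_mul_eq_neg τ (div_pos ha_pos (by positivity : 0 < 2 * l2)).le
  have hu : u ≠ 0 := abs_pos.mp (hu_abs ▸ by positivity)
  refine ⟨⟨u, ?_⟩, mem_lowerBounds_range (sub_sq_div_nonpos_of_two_sqrt_le hl0.le hl2 ha)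
    fun t _ => sub_sq_div_le_quadratic hl2 t⟩
  rw [apply_of_ne_zero hu, hτu, hu_abs, quadratic_at_vertex hl2]
  ring

end penalizedQuadratic

theorem stmt0_general (l0 l1 l2 τ : ℝ) (hl0 : 0 < l0) (hl2 : 0 < l2) :
    (|τ| ≤ 2 * Real.sqrt (l0 * l2) + l1 →
      IsGLB (Set.range fun u : ℝ =>
        τ * u + (if u ≠ 0 then l0 else 0) + l1 * |u| + l2 * u ^ 2) 0) ∧
    (2 * Real.sqrt (l0 * l2) + l1 ≤ |τ| →
      IsGLB (Set.range fun u : ℝ =>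
        τ * u + (if u ≠ 0 then l0 else 0) + l1 * |u| + l2 * u ^ 2)
        (l0 - (|τ| - l1) ^ 2 / (4 * l2))) :=
  ⟨fun hτ => (penalizedQuadratic.isLeast_range_zero hl0.le hl2.le hτ).isGLB,
    fun hτ => (penalizedQuadratic.isLeast_range_vertex hl0 hl2 hτ).isGLB⟩

/-- coordinatewise infimum of `h(u) = τu + λ₀·𝟙{u≠0} + λ₁|u| + λ₂u²`. -/
theorem stmt0 (l0 l1 l2 τ : ℝ) (hl0 : 0 < l0) (hl1 : 0 ≤ l1) (hl2 : 0 < l2) :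
    (|τ| ≤ 2 * Real.sqrt (l0 * l2) + l1 →
      IsGLB (Set.range fun u : ℝ =>
        τ * u + (if u ≠ 0 then l0 else 0) + l1 * |u| + l2 * u ^ 2) 0) ∧
    (2 * Real.sqrt (l0 * l2) + l1 ≤ |τ| →
      IsGLB (Set.range fun u : ℝ =>
        τ * u + (if u ≠ 0 then l0 else 0) + l1 * |u| + l2 * u ^ 2)
        (l0 - (|τ| - l1) ^ 2 / (4 * l2))) :=
  stmt0_general l0 l1 l2 τ hl0 hl2
end

section
/- Let λ₀ > 0, λ₁ ≥ 0, λ₂ > 0 and τ ∈ ℝ, define h(u) = τ·u + λ₀·𝟙{u ≠ 0} + λ₁|u| + λ₂u² for u ∈ ℝ, and set û = −sign(τ)·(|τ| − λ₁)/(2λ₂). Then: (i) if |τ| > 2√(λ₀λ₂) + λ₁, û attains the infimum of h over ℝ and h(û) < h(0) = 0; (ii) if |τ| < 2√(λ₀λ₂) + λ₁, then 0 is the unique minimizer of h, i.e. h(u) > h(0) = 0 for every u ≠ 0; (iii) if |τ| = 2√(λ₀λ₂) + λ₁, then both 0 and û attain the infimum of h, which equals 0. -/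
/-!
For `u ≠ 0`, `τ u ≥ -|τ| |u|` with equality when `u` has the sign opposite to `τ`, so
`h u ≥ λ₀ - (|τ| - λ₁) |u| + λ₂ u²`, a quadratic in `|u|` minimised at `|û| = (|τ| - λ₁) / (2λ₂)`
with value `λ₀ - (|τ| - λ₁)² / (4λ₂)`. By AM-GM, `2√(λ₀λ₂) |u| ≤ λ₀ + λ₂ u²`, so also
`h u ≥ (2√(λ₀λ₂) + λ₁ - |τ|) |u|`. The sign of `2√(λ₀λ₂) + λ₁ - |τ|` decides between the three cases.
-/

open Real

theorem mul_sub_mul_sq_le_sq_div {c : ℝ} (hc : 0 < c) (a t : ℝ) :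
    a * t - c * t ^ 2 ≤ a ^ 2 / (4 * c) := by
  rw [le_div_iff₀ (by positivity)]
  nlinarith [sq_nonneg (2 * c * t - a)]

noncomputable def thresholdObjective (τ l0 l1 l2 u : ℝ) : ℝ :=
  τ * u + (if u ≠ 0 then l0 else 0) + l1 * |u| + l2 * u ^ 2

namespace thresholdObjective

variable {τ l0 l1 l2 : ℝ}

theorem apply_zero : thresholdObjective τ l0 l1 l2 0 = 0 := by
  simp [thresholdObjective]

theorem quadratic_le {u : ℝ} (hu : u ≠ 0) :
    l0 - (|τ| - l1) * |u| + l2 * |u| ^ 2 ≤ thresholdObjective τ l0 l1 l2 u := by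
  have hτu : -(|τ| * |u|) ≤ τ * u := abs_mul τ u ▸ neg_abs_le (τ * u)
  rw [thresholdObjective, if_pos hu, sq_abs]
  linarith

theorem apply_neg_sign_mul (hτ : τ ≠ 0) {t : ℝ} (ht : 0 < t) :
    thresholdObjective τ l0 l1 l2 (-sign τ * t) = l0 - (|τ| - l1) * t + l2 * t ^ 2 := by
  rcases hτ.lt_or_gt with hneg | hpos
  · rw [sign_of_neg hneg, abs_of_neg hneg, thresholdObjective, if_pos (by simp [ht.ne']),
      abs_of_pos (by linarith)]
    ring
  · rw [sign_of_pos hpos, abs_of_pos hpos, thresholdObjective, if_pos (by simp [ht.ne']),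
      abs_of_neg (by linarith)]
    ring

theorem mul_abs_le (hl0 : 0 ≤ l0) (hl2 : 0 ≤ l2) (u : ℝ) :
    (2 * √(l0 * l2) + l1 - |τ|) * |u| ≤ thresholdObjective τ l0 l1 l2 u := by
  rcases eq_or_ne u 0 with rfl | hu
  · simp [apply_zero]
  have amgm : 2 * √(l0 * l2) * |u| ≤ l0 + l2 * |u| ^ 2 := by
    have := two_mul_le_add_sq (√l0) (√l2 * |u|)
    rw [mul_pow, sq_sqrt hl0, sq_sqrt hl2] at this
    rw [sqrt_mul hl0]
    linarith
  refine (quadratic_le hu).trans' ?_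
  linarith

theorem sub_sq_div_le (hl2 : 0 < l2) {u : ℝ} (hu : u ≠ 0) :
    l0 - (|τ| - l1) ^ 2 / (4 * l2) ≤ thresholdObjective τ l0 l1 l2 u := by
  refine (quadratic_le hu).trans' ?_
  linarith [mul_sub_mul_sq_le_sq_div hl2 (|τ| - l1) |u|]

theorem apply_threshold (hl1 : 0 ≤ l1) (hl2 : 0 < l2) (hτ : l1 < |τ|) :
    thresholdObjective τ l0 l1 l2 (-sign τ * (|τ| - l1) / (2 * l2)) =
      l0 - (|τ| - l1) ^ 2 / (4 * l2) := by
  have hτ0 : τ ≠ 0 := by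
    rintro rfl
    rw [abs_zero] at hτ
    linarith
  rw [mul_div_assoc, apply_neg_sign_mul hτ0 (div_pos (by linarith) (by positivity))]
  field_simp
  ring

end thresholdObjective

open thresholdObjective in
/-- characterization of the minimizers of
`h(u) = τu + λ₀·𝟙{u≠0} + λ₁|u| + λ₂u²`. -/
theorem stmt1 (l0 l1 l2 τ : ℝ) (hl0 : 0 < l0) (hl1 : 0 ≤ l1) (hl2 : 0 < l2)
    (h : ℝ → ℝ)
    (hdef : ∀ u, h u = τ * u + (if u ≠ 0 then l0 else 0) + l1 * |u| + l2 * u ^ 2)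
    (uhat : ℝ) (huhat : uhat = -(Real.sign τ) * (|τ| - l1) / (2 * l2)) :
    (2 * Real.sqrt (l0 * l2) + l1 < |τ| →
      (∀ u, h uhat ≤ h u) ∧ h uhat < h 0 ∧ h 0 = 0) ∧
    (|τ| < 2 * Real.sqrt (l0 * l2) + l1 →
      h 0 = 0 ∧ ∀ u, u ≠ 0 → h 0 < h u) ∧
    (|τ| = 2 * Real.sqrt (l0 * l2) + l1 →
      (∀ u, h 0 ≤ h u) ∧ h uhat = 0 ∧ h 0 = 0) := by
  have hh : h = thresholdObjective τ l0 l1 l2 := funext hdef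
  subst hh huhat
  have hc0 : 0 < 2 * √(l0 * l2) := by positivity
  have hc : (2 * √(l0 * l2)) ^ 2 = 4 * l0 * l2 := by
    rw [mul_pow, sq_sqrt (by positivity)]
    ring
  refine ⟨fun hlt => ?_, fun hlt => ⟨apply_zero, fun u hu => ?_⟩, fun heq => ?_⟩
  · have hval := apply_threshold (l0 := l0) hl1 hl2 (by linarith)
    have hsq : 4 * l0 * l2 < (|τ| - l1) ^ 2 :=
      hc ▸ pow_lt_pow_left₀ (by linarith) hc0.le two_ne_zero
    have hneg : l0 - (|τ| - l1) ^ 2 / (4 * l2) < 0 := by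
      rw [sub_neg, lt_div_iff₀ (by positivity)]
      linarith
    refine ⟨fun u => ?_, by rwa [apply_zero, hval], apply_zero⟩
    rcases eq_or_ne u 0 with rfl | hu
    · rw [apply_zero, hval]
      exact hneg.le
    · exact hval ▸ sub_sq_div_le hl2 hu
  · rw [apply_zero]
    exact (mul_pos (by linarith) (abs_pos.2 hu)).trans_le (mul_abs_le hl0.le hl2.le u)
  · refine ⟨fun u => ?_, ?_, apply_zero⟩
    · rw [apply_zero]
      refine le_trans (le_of_eq ?_) (mul_abs_le hl0.le hl2.le u)
      rw [heq]
      ring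
    · rw [apply_threshold hl1 hl2 (by linarith), show |τ| - l1 = 2 * √(l0 * l2) by linarith, hc]
      field_simp
      ring
end

section
/- For every α ∈ ℝ^n, the infimum over β ∈ ℝ^p of the Lagrangian L(β, α) equals the dual objective D(α), i.e. inf_{β ∈ ℝ^p} L(β, α) = D(α). -/
noncomputable section

/-- ℓ₀ "norm": number of nonzero entries, as a real number. -/
def zeroNorm {p : ℕ} (β : EuclideanSpace ℝ (Fin p)) : ℝ :=
  ((Finset.univ.filter fun j => β j ≠ 0).card : ℝ)

/-- ℓ₁ norm. -/
def oneNorm {p : ℕ} (β : EuclideanSpace ℝ (Fin p)) : ℝ := ∑ j, |β j|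

/-- `X β`, where `x j` is the `j`-th column of `X`. -/
def Xmul {n p : ℕ} (x : Fin p → EuclideanSpace ℝ (Fin n))
    (β : EuclideanSpace ℝ (Fin p)) : EuclideanSpace ℝ (Fin n) :=
  ∑ j, β j • x j

/-- Primal objective `P(β)`. -/
def Pobj {n p : ℕ} (x : Fin p → EuclideanSpace ℝ (Fin n)) (y : EuclideanSpace ℝ (Fin n))
    (l0 l1 l2 : ℝ) (β : EuclideanSpace ℝ (Fin p)) : ℝ :=
  (1/2) * ‖y - Xmul x β‖^2 + l0 * zeroNorm β + l1 * oneNorm β + l2 * ‖β‖^2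

/-- Lagrangian `L(β, α)`. -/
def Lag {n p : ℕ} (x : Fin p → EuclideanSpace ℝ (Fin n)) (y : EuclideanSpace ℝ (Fin n))
    (l0 l1 l2 : ℝ) (β : EuclideanSpace ℝ (Fin p)) (α : EuclideanSpace ℝ (Fin n)) : ℝ :=
  (inner ℝ α (Xmul x β) : ℝ) - (1/2) * ‖α‖^2 - (inner ℝ y α : ℝ)
    + l0 * zeroNorm β + l1 * oneNorm β + l2 * ‖β‖^2

/-- `η_j(α) = −⟨x_j, α⟩ / (2 λ₂)`. -/
def etav {n p : ℕ} (x : Fin p → EuclideanSpace ℝ (Fin n)) (l2 : ℝ)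
    (α : EuclideanSpace ℝ (Fin n)) (j : Fin p) : ℝ :=
  -(inner ℝ (x j) α : ℝ) / (2 * l2)

/-- Threshold `η₀ = (2√(λ₀λ₂) + λ₁)/(2λ₂)`. -/
def eta0 (l0 l1 l2 : ℝ) : ℝ := (2 * Real.sqrt (l0 * l2) + l1) / (2 * l2)

/-- Scalar function `ψ` appearing in the dual objective. -/
def psi (l0 l1 l2 : ℝ) (t : ℝ) : ℝ :=
  if eta0 l0 l1 l2 ≤ |t| then -l2 * (|t| - l1 / (2 * l2))^2 + l0 else 0

/-- Dual objective `D(α)` for the square loss. -/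
def Dobj {n p : ℕ} (x : Fin p → EuclideanSpace ℝ (Fin n)) (y : EuclideanSpace ℝ (Fin n))
    (l0 l1 l2 : ℝ) (α : EuclideanSpace ℝ (Fin n)) : ℝ :=
  -(1/2) * ‖α‖^2 - (inner ℝ y α : ℝ) + ∑ j : Fin p, psi l0 l1 l2 (etav x l2 α j)

/-- Thresholding map `𝔅`. -/
def Bth (l0 l1 l2 : ℝ) (t : ℝ) : ℝ :=
  if eta0 l0 l1 l2 ≤ |t| then Real.sign t * (|t| - l1 / (2 * l2)) else 0

/-- Primal-dual link `β(α)` with entries `β_j(α) = 𝔅(η_j(α))`. -/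
def betaOf {n p : ℕ} (x : Fin p → EuclideanSpace ℝ (Fin n)) (l0 l1 l2 : ℝ)
    (α : EuclideanSpace ℝ (Fin n)) : EuclideanSpace ℝ (Fin p) :=
  WithLp.toLp 2 (fun j => Bth l0 l1 l2 (etav x l2 α j))

/-- `(β̄, ᾱ)` is a saddle point of the Lagrangian `L`. -/
def IsSaddle {n p : ℕ} (x : Fin p → EuclideanSpace ℝ (Fin n)) (y : EuclideanSpace ℝ (Fin n))
    (l0 l1 l2 : ℝ) (βb : EuclideanSpace ℝ (Fin p)) (αb : EuclideanSpace ℝ (Fin n)) : Prop :=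
  (∀ α, Lag x y l0 l1 l2 βb α ≤ Lag x y l0 l1 l2 βb αb) ∧
  (∀ β, Lag x y l0 l1 l2 βb αb ≤ Lag x y l0 l1 l2 β αb)

/-
`L(·, α)` is separable: `L(β, α) = -½‖α‖² - ⟨y, α⟩ + Σ_j (λ₂β_j² - 2λ₂η_jβ_j + λ₁|β_j| + λ₀[β_j ≠ 0])`,
so its infimum is the sum of the one-dimensional minima. With `a = |t| - λ₁/(2λ₂)`, completing the
square gives `λ₀ - λ₂a²` as the minimum over `b ≠ 0`, attained at `b = 𝔅(t)`, against the value `0` at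
`b = 0`; the threshold `η₀` is exactly where `λ₂a² = λ₀`, so the scalar minimum is `ψ(t)`, and the
infimum of `L(·, α)` is `D(α)`, attained at `β(α)`.
-/

section ScalarProblem

variable {l0 l1 l2 : ℝ}

/-- The summand of `L(β, α)` contributed by `β_j = b`, where `t = η_j(α)`
(so that `⟨α, x_j⟩ β_j = -2λ₂ t b`). -/
def lagTerm (l0 l1 l2 t b : ℝ) : ℝ :=
  l2 * b ^ 2 - 2 * l2 * t * b + l1 * |b| + if b = 0 then 0 else l0

lemma eta0_le_abs_iff (hl2 : 0 < l2) (t : ℝ) :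
    eta0 l0 l1 l2 ≤ |t| ↔ √(l0 * l2) ≤ l2 * (|t| - l1 / (2 * l2)) := by
  have hhalf : l2 * (l1 / (2 * l2)) = l1 / 2 := by field_simp
  rw [eta0, div_le_iff₀ (by positivity), mul_sub, hhalf]
  constructor <;> intro h <;> linarith

lemma lagTerm_ge (hl2 : 0 < l2) (t b : ℝ) :
    l2 * |b| ^ 2 - 2 * l2 * (|t| - l1 / (2 * l2)) * |b| + (if b = 0 then 0 else l0)
      ≤ lagTerm l0 l1 l2 t b := by
  have htb : t * b ≤ |t| * |b| := (le_abs_self _).trans_eq (abs_mul t b)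
  have h2a : 2 * l2 * (|t| - l1 / (2 * l2)) = 2 * l2 * |t| - l1 := by field_simp
  rw [lagTerm, ← sq_abs b, h2a]
  nlinarith [mul_le_mul_of_nonneg_left htb hl2.le]

lemma psi_le_lagTerm (hl0 : 0 ≤ l0) (hl2 : 0 < l2) (t b : ℝ) :
    psi l0 l1 l2 t ≤ lagTerm l0 l1 l2 t b := by
  have hlow := lagTerm_ge (l0 := l0) (l1 := l1) hl2 t b
  rw [psi]
  set a := |t| - l1 / (2 * l2)
  set s := √(l0 * l2)
  have hsq : s ^ 2 = l0 * l2 := Real.sq_sqrt (by positivity)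
  have hs : 0 ≤ s := Real.sqrt_nonneg _
  split_ifs at hlow ⊢ with hact hb hb
  · have hsa : s ≤ l2 * a := (eta0_le_abs_iff hl2 t).1 hact
    have hl0a : l2 * l0 ≤ l2 * (l2 * a ^ 2) := by nlinarith
    subst hb
    simp [lagTerm]
    linarith [le_of_mul_le_mul_left hl0a hl2]
  · nlinarith [sq_nonneg (|b| - a)]
  · simp [hb, lagTerm]
  · have hsa : l2 * a < s := lt_of_not_ge (mt (eta0_le_abs_iff hl2 t).2 hact)
    have hsquare : l2 * (l2 * |b| ^ 2 - 2 * s * |b| + l0) = (l2 * |b| - s) ^ 2 := by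
      linear_combination -hsq
    have hquad : 0 ≤ l2 * |b| ^ 2 - 2 * s * |b| + l0 :=
      nonneg_of_mul_nonneg_right (hsquare ▸ sq_nonneg _) hl2
    nlinarith [mul_le_mul_of_nonneg_right hsa.le (abs_nonneg b)]

lemma Real.sign_mul_self (t : ℝ) : Real.sign t * t = |t| := by
  rcases lt_trichotomy t 0 with h | rfl | h
  · rw [Real.sign_of_neg h, abs_of_neg h]; ring
  · simp
  · rw [Real.sign_of_pos h, abs_of_pos h]; ring

lemma lagTerm_Bth (hl0 : 0 < l0) (hl1 : 0 ≤ l1) (hl2 : 0 < l2) (t : ℝ) :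
    lagTerm l0 l1 l2 t (Bth l0 l1 l2 t) = psi l0 l1 l2 t := by
  rw [Bth, psi]
  split_ifs with hact
  · set a := |t| - l1 / (2 * l2)
    have ha : 0 < a := by
      have hs : 0 < √(l0 * l2) := Real.sqrt_pos.2 (by positivity)
      exact pos_of_mul_pos_right (hs.trans_le ((eta0_le_abs_iff hl2 t).1 hact)) hl2.le
    have ht : t ≠ 0 := by
      rintro rfl
      have : 0 ≤ l1 / (2 * l2) := by positivity
      simp only [a, abs_zero] at ha
      linarith
    have hsign : |Real.sign t| = 1 := by
      rcases Real.sign_apply_eq_of_ne_zero t ht with h | h <;> simp [h]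
    have hb_abs : |Real.sign t * a| = a := by rw [abs_mul, hsign, one_mul, abs_of_pos ha]
    have hb_ne : Real.sign t * a ≠ 0 := abs_pos.1 (hb_abs.symm ▸ ha)
    have htb : t * (Real.sign t * a) = |t| * a := by
      rw [← mul_assoc, mul_comm t, Real.sign_mul_self]
    have h2a : 2 * l2 * a = 2 * l2 * |t| - l1 := by simp only [a]; field_simp
    rw [lagTerm, if_neg hb_ne, hb_abs, ← sq_abs, hb_abs]
    linear_combination (-2 * l2) * htb + a * h2a
  · simp [lagTerm]

end ScalarProblem

section Separability

variable {n p : ℕ} (x : Fin p → EuclideanSpace ℝ (Fin n))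

lemma inner_Xmul (β : EuclideanSpace ℝ (Fin p)) (α : EuclideanSpace ℝ (Fin n)) :
    inner ℝ α (Xmul x β) = ∑ j, β j * inner ℝ (x j) α := by
  simp only [Xmul, inner_sum, real_inner_smul_right, real_inner_comm]

lemma zeroNorm_eq_sum (β : EuclideanSpace ℝ (Fin p)) :
    zeroNorm β = ∑ j, if β j = 0 then 0 else 1 := by
  simp [zeroNorm, Finset.sum_ite, Finset.filter_not]

lemma Lag_eq_sum_lagTerm (y : EuclideanSpace ℝ (Fin n)) (l0 l1 : ℝ) {l2 : ℝ} (hl2 : l2 ≠ 0)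
    (β : EuclideanSpace ℝ (Fin p)) (α : EuclideanSpace ℝ (Fin n)) :
    Lag x y l0 l1 l2 β α = -(1/2) * ‖α‖ ^ 2 - inner ℝ y α
      + ∑ j, lagTerm l0 l1 l2 (etav x l2 α j) (β j) := by
  have hterm : ∀ j, lagTerm l0 l1 l2 (etav x l2 α j) (β j)
      = β j * inner ℝ (x j) α + l0 * (if β j = 0 then 0 else 1) + l1 * |β j| + l2 * β j ^ 2 := by
    intro j
    have hη : 2 * l2 * etav x l2 α j = -inner ℝ (x j) α := by rw [etav]; field_simp
    rw [lagTerm, mul_ite, mul_zero, mul_one]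
    linear_combination -β j * hη
  simp only [Lag, hterm, Finset.sum_add_distrib, ← Finset.mul_sum, inner_Xmul, zeroNorm_eq_sum,
    oneNorm, EuclideanSpace.real_norm_sq_eq]
  ring

end Separability

/-- `inf_{β} L(β, α) = D(α)` for every `α`. -/
theorem stmt2 (n p : ℕ) (x : Fin p → EuclideanSpace ℝ (Fin n))
    (y : EuclideanSpace ℝ (Fin n)) (l0 l1 l2 : ℝ)
    (hl0 : 0 < l0) (hl1 : 0 ≤ l1) (hl2 : 0 < l2)
    (α : EuclideanSpace ℝ (Fin n)) :
    IsGLB (Set.range fun β : EuclideanSpace ℝ (Fin p) => Lag x y l0 l1 l2 β α)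
      (Dobj x y l0 l1 l2 α) := by
  refine IsLeast.isGLB ⟨⟨betaOf x l0 l1 l2 α, ?_⟩, ?_⟩
  · simp only [Lag_eq_sum_lagTerm x y l0 l1 hl2.ne', Dobj, betaOf, lagTerm_Bth hl0 hl1 hl2]
  · rintro _ ⟨β, rfl⟩
    dsimp only
    rw [Lag_eq_sum_lagTerm x y l0 l1 hl2.ne', Dobj]
    gcongr with j
    exact psi_le_lagTerm hl0.le hl2 _ _
end
end

section
/- Define g(α) = Xβ(α) − α − y for α ∈ ℝ^n, where β(α) has entries β_j(α) = 𝔅(η_j(α)). Then g(α) is a supergradient of the 1-strongly concave function D: for all α₁, α₂ ∈ ℝ^n, D(α₁) ≤ D(α₂) + ⟨g(α₂), α₁ − α₂⟩ − (1/2)‖α₁ − α₂‖². -/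
/-!
The dual objective is the partial minimum of the Lagrangian, `D(α) = min_β L(β, α)`. The
minimisation separates over coordinates: `ψ(η_j(α))` is the minimum over `b` of
`λ₂ b² − 2λ₂ η_j(α) b + λ₁|b| + λ₀ [b ≠ 0]`, attained at the hard-thresholded value
`b = 𝔅(η_j(α))`. Since `L(β, ·)` is a concave quadratic with gradient `Xβ − α − y` and Hessian `−I`,
`D(α₁) ≤ L(β(α₂), α₁) = L(β(α₂), α₂) + ⟨Xβ(α₂) − α₂ − y, α₁ − α₂⟩ − ½‖α₁ − α₂‖²`,
and `L(β(α₂), α₂) = D(α₂)`.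
-/

noncomputable section

def coordLag (l0 l1 l2 t b : ℝ) : ℝ :=
  -2 * l2 * t * b + l0 * (if b ≠ 0 then 1 else 0) + l1 * |b| + l2 * b ^ 2

lemma eta0_le_iff {l0 l1 l2 : ℝ} (hl2 : 0 < l2) (t : ℝ) :
    eta0 l0 l1 l2 ≤ t ↔ 0 ≤ t - l1 / (2 * l2) ∧ l0 ≤ l2 * (t - l1 / (2 * l2)) ^ 2 := by
  have hsplit : eta0 l0 l1 l2 = Real.sqrt (l0 * l2) / l2 + l1 / (2 * l2) := by
    unfold eta0; field_simp
  rw [hsplit, ← le_sub_iff_add_le, div_le_iff₀ hl2, mul_comm _ l2, Real.sqrt_le_iff]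
  refine and_congr (mul_nonneg_iff_of_pos_right hl2) ?_
  constructor <;> intro h <;> nlinarith

lemma psi_le_coordLag {l0 l1 l2 : ℝ} (hl0 : 0 ≤ l0) (hl2 : 0 < l2) (t b : ℝ) :
    psi l0 l1 l2 t ≤ coordLag l0 l1 l2 t b := by
  obtain ⟨c, rfl⟩ : ∃ c, l1 = 2 * l2 * c := ⟨l1 / (2 * l2), by field_simp⟩
  have hc : 2 * l2 * c / (2 * l2) = c := by field_simp
  have hcross : -2 * l2 * |t| * |b| ≤ -2 * l2 * t * b := by
    have := mul_le_mul_of_nonneg_left (le_abs_self (t * b)) (by positivity : 0 ≤ 2 * l2)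
    rw [abs_mul] at this; linarith
  have hb2 : b ^ 2 = |b| ^ 2 := (sq_abs b).symm
  have habs := abs_nonneg b
  unfold psi coordLag
  simp only [eta0_le_iff hl2, hc]
  split_ifs with ht hb hb
  · nlinarith [mul_nonneg hl2.le (sq_nonneg (|b| - (|t| - c)))]
  · simp only [not_not] at hb; subst hb
    simp only [abs_zero]; nlinarith
  · rw [not_and_or, not_le, not_le] at ht
    rcases ht with hu | hu
    · nlinarith [mul_nonneg hl2.le (mul_nonneg habs (neg_nonneg.mpr hu.le))]
    · nlinarith [mul_nonneg hl2.le (sq_nonneg (|b| - (|t| - c)))]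
  · simp only [not_not] at hb; subst hb; simp

lemma coordLag_Bth {l0 l1 l2 : ℝ} (hl0 : 0 < l0) (hl1 : 0 ≤ l1) (hl2 : 0 < l2) (t : ℝ) :
    coordLag l0 l1 l2 t (Bth l0 l1 l2 t) = psi l0 l1 l2 t := by
  have heta0 : 0 < eta0 l0 l1 l2 := by unfold eta0; positivity
  unfold Bth psi
  split_ifs with ht
  · have ht0 : t ≠ 0 := abs_pos.mp (heta0.trans_le ht)
    rw [eta0_le_iff hl2] at ht
    obtain ⟨c, rfl⟩ : ∃ c, l1 = 2 * l2 * c := ⟨l1 / (2 * l2), by field_simp⟩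
    have hc : 2 * l2 * c / (2 * l2) = c := by field_simp
    rw [hc] at ht ⊢
    have hu : 0 < |t| - c := lt_of_le_of_ne ht.1 fun h => by
      rw [← h] at ht; linarith [ht.2]
    unfold coordLag
    rcases ht0.lt_or_gt with htn | htp
    · rw [Real.sign_of_neg htn, abs_of_neg htn] at *
      rw [if_pos (by linarith), abs_of_neg (by linarith)]; ring
    · rw [Real.sign_of_pos htp, abs_of_pos htp] at *
      rw [if_pos (by linarith), abs_of_pos (by linarith)]; ring
  · simp [coordLag]

section Lagrangian

variable {n p : ℕ} (x : Fin p → EuclideanSpace ℝ (Fin n)) (y : EuclideanSpace ℝ (Fin n))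
  {l0 l1 l2 : ℝ}

lemma Lag_eq_sum_coordLag (hl2 : l2 ≠ 0) (β : EuclideanSpace ℝ (Fin p))
    (α : EuclideanSpace ℝ (Fin n)) :
    Lag x y l0 l1 l2 β α =
      -(1/2) * ‖α‖ ^ 2 - inner ℝ y α + ∑ j, coordLag l0 l1 l2 (etav x l2 α j) (β j) := by
  have hcross : ∀ j, -2 * l2 * etav x l2 α j * β j = inner ℝ α (β j • x j) := fun j => by
    rw [real_inner_smul_right, real_inner_comm]; unfold etav; field_simp
  simp only [Lag, Xmul, zeroNorm, oneNorm, coordLag, Finset.sum_add_distrib, ← Finset.mul_sum,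
    hcross, ← inner_sum, Finset.natCast_card_filter, EuclideanSpace.real_norm_sq_eq β]
  ring

lemma Dobj_le_Lag (hl0 : 0 ≤ l0) (hl2 : 0 < l2) (β : EuclideanSpace ℝ (Fin p))
    (α : EuclideanSpace ℝ (Fin n)) : Dobj x y l0 l1 l2 α ≤ Lag x y l0 l1 l2 β α := by
  rw [Lag_eq_sum_coordLag x y hl2.ne']
  unfold Dobj
  gcongr with j
  exact psi_le_coordLag hl0 hl2 _ _

lemma Lag_betaOf (hl0 : 0 < l0) (hl1 : 0 ≤ l1) (hl2 : 0 < l2) (α : EuclideanSpace ℝ (Fin n)) :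
    Lag x y l0 l1 l2 (betaOf x l0 l1 l2 α) α = Dobj x y l0 l1 l2 α := by
  simp only [Lag_eq_sum_coordLag x y hl2.ne', betaOf, coordLag_Bth hl0 hl1 hl2, Dobj]

lemma Lag_eq_add_inner_sub (β : EuclideanSpace ℝ (Fin p)) (α₁ α₂ : EuclideanSpace ℝ (Fin n)) :
    Lag x y l0 l1 l2 β α₁ = Lag x y l0 l1 l2 β α₂
      + inner ℝ (Xmul x β - α₂ - y) (α₁ - α₂) - (1/2) * ‖α₁ - α₂‖ ^ 2 := by
  have hnorm : ‖α₁‖ ^ 2 = ‖α₂‖ ^ 2 + 2 * inner ℝ α₂ (α₁ - α₂) + ‖α₁ - α₂‖ ^ 2 := by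
    rw [← norm_add_sq_real, add_sub_cancel]
  unfold Lag
  simp only [inner_sub_left, inner_sub_right, real_inner_comm (Xmul x β)] at hnorm ⊢
  linarith

end Lagrangian

/-- `g(α) = Xβ(α) − α − y` is a supergradient of the 1-strongly concave `D`. -/
theorem stmt10 (n p : ℕ) (x : Fin p → EuclideanSpace ℝ (Fin n))
    (y : EuclideanSpace ℝ (Fin n)) (l0 l1 l2 : ℝ)
    (hl0 : 0 < l0) (hl1 : 0 ≤ l1) (hl2 : 0 < l2)
    (g : EuclideanSpace ℝ (Fin n) → EuclideanSpace ℝ (Fin n))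
    (hg : ∀ α, g α = Xmul x (betaOf x l0 l1 l2 α) - α - y) :
    ∀ α₁ α₂ : EuclideanSpace ℝ (Fin n),
      Dobj x y l0 l1 l2 α₁ ≤ Dobj x y l0 l1 l2 α₂ + (inner ℝ (g α₂) (α₁ - α₂) : ℝ)
        - (1/2) * ‖α₁ - α₂‖ ^ 2 := by
  intro α₁ α₂
  calc Dobj x y l0 l1 l2 α₁ ≤ Lag x y l0 l1 l2 (betaOf x l0 l1 l2 α₂) α₁ :=
        Dobj_le_Lag x y hl0.le hl2 _ _
    _ = Lag x y l0 l1 l2 (betaOf x l0 l1 l2 α₂) α₂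
          + inner ℝ (g α₂) (α₁ - α₂) - (1/2) * ‖α₁ - α₂‖ ^ 2 := by
        rw [Lag_eq_add_inner_sub, hg]
    _ = _ := by rw [Lag_betaOf x y hl0 hl1 hl2]
end
end

section
/- Support stability: let ᾱ ∈ ℝ^n be such that x_j ≠ 0 and |η_j(ᾱ)| ≠ η₀ for every j, and let S = {j : β_j(ᾱ) ≠ 0}. Suppose α ∈ ℝ^n satisfies ‖α − ᾱ‖ < 2λ₂·(|η_j(ᾱ)| − η₀)/‖x_j‖ for every j ∈ S and ‖α − ᾱ‖ < 2λ₂·(η₀ − |η_j(ᾱ)|)/‖x_j‖ for every j ∉ S. Then for every j, β_j(α) ≠ 0 if and only if β_j(ᾱ) ≠ 0; i.e. supp(β(α)) = supp(β(ᾱ)). -/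
noncomputable section

/- The support of `β(α)` is where `|η_j(α)|` reaches the threshold `η₀`. Since `η_j` is
`‖x_j‖ / (2λ₂)`-Lipschitz in `α` (Cauchy–Schwarz), the assumed bound on `‖α - ᾱ‖` moves
`η_j(α)` by less than the gap `||η_j(ᾱ)| - η₀|`, so `|η_j|` stays on the same side of `η₀`. -/

lemma le_abs_iff_le_abs_of_abs_sub_lt {s t c : ℝ} (h : |s - t| < |(c - |t|)|) :
    c ≤ |s| ↔ c ≤ |t| := by
  have hst := abs_sub_abs_le_abs_sub s t
  have hts := abs_sub_abs_le_abs_sub t s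
  rw [abs_sub_comm t s] at hts
  constructor <;> intro hc
  · by_contra! hlt
    rw [abs_of_pos (sub_pos.mpr hlt)] at h
    linarith
  · rw [abs_of_nonpos (sub_nonpos.mpr hc)] at h
    linarith

lemma div_lt_eta0 {l0 l2 : ℝ} (hl0 : 0 < l0) (hl2 : 0 < l2) (l1 : ℝ) :
    l1 / (2 * l2) < eta0 l0 l1 l2 := by
  have hsqrt : 0 < Real.sqrt (l0 * l2) := Real.sqrt_pos.mpr (by positivity)
  unfold eta0
  gcongr
  linarith

lemma Bth_ne_zero_iff {l0 l1 l2 : ℝ} (hl0 : 0 < l0) (hl1 : 0 ≤ l1) (hl2 : 0 < l2) (t : ℝ) :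
    Bth l0 l1 l2 t ≠ 0 ↔ eta0 l0 l1 l2 ≤ |t| := by
  unfold Bth
  split_ifs with ht
  · simp only [ht, iff_true]
    have hgap : l1 / (2 * l2) < |t| := (div_lt_eta0 hl0 hl2 l1).trans_le ht
    have ht0 : t ≠ 0 := by
      rintro rfl
      rw [abs_zero] at hgap
      exact hgap.not_ge (by positivity)
    exact mul_ne_zero (Real.sign_eq_zero_iff.not.mpr ht0) (sub_pos.mpr hgap).ne'
  · simpa using ht

lemma abs_etav_sub_etav_lt {n p : ℕ} {x : Fin p → EuclideanSpace ℝ (Fin n)} {l2 : ℝ}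
    (hl2 : 0 < l2) {α αb : EuclideanSpace ℝ (Fin n)} {j : Fin p} {c : ℝ}
    (h : ‖α - αb‖ < 2 * l2 * c / ‖x j‖) :
    |etav x l2 α j - etav x l2 αb j| < c := by
  have hxj : 0 < ‖x j‖ := by
    refine (norm_nonneg _).lt_of_ne fun h0 => ?_
    rw [← h0, div_zero] at h
    exact (norm_nonneg _).not_gt h
  have hdiff : etav x l2 α j - etav x l2 αb j = -inner ℝ (x j) (α - αb) / (2 * l2) := by
    unfold etav
    rw [inner_sub_right]
    ring
  rw [hdiff, abs_div, abs_neg, abs_of_pos (by positivity : (0 : ℝ) < 2 * l2),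
    div_lt_iff₀ (by positivity)]
  rw [lt_div_iff₀ hxj] at h
  calc |inner ℝ (x j) (α - αb)| ≤ ‖x j‖ * ‖α - αb‖ := abs_real_inner_le_norm _ _
    _ < c * (2 * l2) := by linarith

theorem stmt15_general (n p : ℕ) (x : Fin p → EuclideanSpace ℝ (Fin n)) (l0 l1 l2 : ℝ)
    (hl0 : 0 < l0) (hl1 : 0 ≤ l1) (hl2 : 0 < l2)
    (αb α : EuclideanSpace ℝ (Fin n))
    (hS : ∀ j : Fin p, betaOf x l0 l1 l2 αb j ≠ 0 →
        ‖α - αb‖ < 2 * l2 * (|etav x l2 αb j| - eta0 l0 l1 l2) / ‖x j‖)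
    (hSc : ∀ j : Fin p, betaOf x l0 l1 l2 αb j = 0 →
        ‖α - αb‖ < 2 * l2 * (eta0 l0 l1 l2 - |etav x l2 αb j|) / ‖x j‖) :
    ∀ j : Fin p, betaOf x l0 l1 l2 α j ≠ 0 ↔ betaOf x l0 l1 l2 αb j ≠ 0 := by
  intro j
  have hβ : ∀ a, betaOf x l0 l1 l2 a j ≠ 0 ↔ eta0 l0 l1 l2 ≤ |etav x l2 a j| :=
    fun a => Bth_ne_zero_iff hl0 hl1 hl2 (etav x l2 a j)
  have hclose : ‖α - αb‖ < 2 * l2 * |(eta0 l0 l1 l2 - |etav x l2 αb j|)| / ‖x j‖ := by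
    by_cases hz : betaOf x l0 l1 l2 αb j = 0
    · have hlt : |etav x l2 αb j| < eta0 l0 l1 l2 := not_le.mp fun h => (hβ αb).mpr h hz
      rw [abs_of_pos (sub_pos.mpr hlt)]
      exact hSc j hz
    · rw [abs_sub_comm, abs_of_nonneg (sub_nonneg.mpr ((hβ αb).mp hz))]
      exact hS j hz
  rw [hβ, hβ]
  exact le_abs_iff_le_abs_of_abs_sub_lt (abs_etav_sub_etav_lt hl2 hclose)

/-- support stability near a dual point. -/
theorem stmt15 (n p : ℕ) (x : Fin p → EuclideanSpace ℝ (Fin n)) (l0 l1 l2 : ℝ)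
    (hl0 : 0 < l0) (hl1 : 0 ≤ l1) (hl2 : 0 < l2)
    (αb α : EuclideanSpace ℝ (Fin n))
    (hx : ∀ j : Fin p, x j ≠ 0)
    (hne : ∀ j : Fin p, |etav x l2 αb j| ≠ eta0 l0 l1 l2)
    (hS : ∀ j : Fin p, betaOf x l0 l1 l2 αb j ≠ 0 →
        ‖α - αb‖ < 2 * l2 * (|etav x l2 αb j| - eta0 l0 l1 l2) / ‖x j‖)
    (hSc : ∀ j : Fin p, betaOf x l0 l1 l2 αb j = 0 →
        ‖α - αb‖ < 2 * l2 * (eta0 l0 l1 l2 - |etav x l2 αb j|) / ‖x j‖) :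
    ∀ j : Fin p, betaOf x l0 l1 l2 α j ≠ 0 ↔ betaOf x l0 l1 l2 αb j ≠ 0 :=
  stmt15_general n p x l0 l1 l2 hl0 hl1 hl2 αb α hS hSc
end
end

section
/- Let λ₀ > 0, λ₁ ≥ 0, λ₂ > 0 and b ∈ ℝ, and define q(t) = (1/2)(1 + 2λ₂)t² − b·t + λ₁|t| + λ₀·𝟙{t ≠ 0} for t ∈ ℝ. Set s = (|b| − λ₁)/(1 + 2λ₂) and define T(b) = sign(b)·s if s ≥ √(2λ₀/(1 + 2λ₂)) and T(b) = 0 otherwise. Then T(b) is a minimizer of q over ℝ: q(T(b)) ≤ q(t) for all t ∈ ℝ. -/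
/-!
Since `b t ≤ |b| |t|`, with equality on the ray of `sign b`, the objective is bounded below by
its value at `sign b * |t|`, so it suffices to minimize over `u = |t| ≥ 0`. Writing
`|b| - λ₁ = a s` with `a = 1 + 2λ₂`, for `u ≠ 0` the objective is `a/2 (u - s)² - a s²/2 + λ₀`,
minimized at `u = s` with value `λ₀ - a s²/2`; comparing with the value `0` at `u = 0` gives the
threshold `s ≥ √(2λ₀/a)`.
-/

namespace L0L1L2

/-- The one-dimensional `ℓ₀ + ℓ₁ + ℓ₂` objective with curvature `a = 1 + 2λ₂`. -/
noncomputable def objective (a b l1 l0 t : ℝ) : ℝ :=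
  (1/2) * a * t ^ 2 - b * t + l1 * |t| + (if t ≠ 0 then l0 else 0)

variable {a b l1 l0 s u : ℝ}

@[simp]
theorem objective_zero : objective a b l1 l0 0 = 0 := by
  simp [objective]

theorem objective_abs_le (t : ℝ) : objective a (|b| - l1) 0 l0 |t| ≤ objective a b l1 l0 t := by
  have hbt : b * t ≤ |b| * |t| := (le_abs_self _).trans (abs_mul b t).le
  simp only [objective, sq_abs, abs_ne_zero]
  linarith

theorem objective_sign_mul (hb : b ≠ 0) (hu : 0 ≤ u) :
    objective a b l1 l0 (Real.sign b * u) = objective a (|b| - l1) 0 l0 u := by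
  rcases hb.lt_or_gt with hb | hb
  · simp only [objective, Real.sign_of_neg hb, abs_of_neg hb, abs_neg,
      abs_of_nonneg hu, ne_eq, neg_eq_zero, neg_one_mul]
    ring
  · simp only [objective, Real.sign_of_pos hb, abs_of_pos hb, abs_of_nonneg hu, one_mul]
    ring

theorem objective_ge_of_ne_zero (ha : 0 ≤ a) (hu : u ≠ 0) :
    l0 - (1/2) * a * s ^ 2 ≤ objective a (a * s) 0 l0 u := by
  have hsq : 0 ≤ a * (u - s) ^ 2 := by positivity
  simp only [objective, if_pos hu]
  linarith

theorem objective_self (hs : s ≠ 0) : objective a (a * s) 0 l0 s = l0 - (1/2) * a * s ^ 2 := by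
  simp only [objective, if_pos hs]
  ring

theorem objective_nonneg_of_nonpos (ha : 0 ≤ a) (hl0 : 0 ≤ l0) (hs : s ≤ 0) (hu : 0 ≤ u) :
    0 ≤ objective a (a * s) 0 l0 u := by
  have hsu : a * s * u ≤ 0 :=
    mul_nonpos_of_nonpos_of_nonneg (mul_nonpos_of_nonneg_of_nonpos ha hs) hu
  have hu2 : 0 ≤ a * u ^ 2 := by positivity
  have hpen : 0 ≤ if u ≠ 0 then l0 else 0 := by split_ifs <;> simp [hl0]
  simp only [objective]
  linarith

theorem objective_hardThreshold_le (ha : 0 < a) (hl0 : 0 ≤ l0) (hu : 0 ≤ u) :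
    objective a (a * s) 0 l0 (if Real.sqrt (2 * l0 / a) ≤ s then s else 0)
      ≤ objective a (a * s) 0 l0 u := by
  split_ifs with h
  · obtain ⟨hs, hs2⟩ := Real.sqrt_le_iff.mp h
    have hthr : 2 * l0 ≤ a * s ^ 2 := by rw [div_le_iff₀ ha] at hs2; linarith
    rcases eq_or_ne s 0 with rfl | hs0
    · rw [objective_zero]
      exact objective_nonneg_of_nonpos ha.le hl0 le_rfl hu
    rw [objective_self hs0]
    rcases eq_or_ne u 0 with rfl | hu0
    · rw [objective_zero]
      linarith
    · exact objective_ge_of_ne_zero ha.le hu0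
  · rw [objective_zero]
    rcases le_or_gt s 0 with hs | hs
    · exact objective_nonneg_of_nonpos ha.le hl0 hs hu
    have hthr : a * s ^ 2 < 2 * l0 := by
      rw [← lt_div_iff₀' ha, ← Real.lt_sqrt hs.le]
      exact not_le.mp h
    rcases eq_or_ne u 0 with rfl | hu0
    · rw [objective_zero]
    · linarith [objective_ge_of_ne_zero (l0 := l0) (s := s) ha.le hu0]

end L0L1L2

open L0L1L2 in
/-- the coordinate-descent thresholding operator `T` minimizes the
one-dimensional objective `q`. -/
theorem stmt16 (l0 l1 l2 b : ℝ) (hl0 : 0 < l0) (hl1 : 0 ≤ l1) (hl2 : 0 < l2)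
    (q : ℝ → ℝ)
    (hq : ∀ t, q t = (1/2) * (1 + 2 * l2) * t ^ 2 - b * t + l1 * |t|
        + (if t ≠ 0 then l0 else 0))
    (s : ℝ) (hs : s = (|b| - l1) / (1 + 2 * l2))
    (T : ℝ)
    (hT : T = if Real.sqrt (2 * l0 / (1 + 2 * l2)) ≤ s then Real.sign b * s else 0) :
    ∀ t : ℝ, q T ≤ q t := by
  intro t
  have ha : 0 < 1 + 2 * l2 := by linarith
  have hq' : q = objective (1 + 2 * l2) b l1 l0 := funext hq
  have hbs : |b| - l1 = (1 + 2 * l2) * s := by rw [hs]; field_simp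
  have hqT : q T = objective (1 + 2 * l2) ((1 + 2 * l2) * s) 0 l0
      (if Real.sqrt (2 * l0 / (1 + 2 * l2)) ≤ s then s else 0) := by
    by_cases h : Real.sqrt (2 * l0 / (1 + 2 * l2)) ≤ s
    · have hs0 : 0 < s := (Real.sqrt_pos.mpr (by positivity)).trans_le h
      have hb : b ≠ 0 := by
        have := mul_pos ha hs0
        rw [← abs_pos]
        linarith
      rw [hq', hT, if_pos h, if_pos h, objective_sign_mul hb hs0.le, hbs]
    · rw [hq', hT, if_neg h, if_neg h, objective_zero, objective_zero]
  calc q T = _ := hqT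
    _ ≤ objective (1 + 2 * l2) ((1 + 2 * l2) * s) 0 l0 |t| :=
      objective_hardThreshold_le ha hl0.le (abs_nonneg t)
    _ = objective (1 + 2 * l2) (|b| - l1) 0 l0 |t| := by rw [hbs]
    _ ≤ q t := hq' ▸ objective_abs_le t
end

section
/- The coordinate-descent operation T never increases the primal objective: let j be an index with ‖x_j‖ = 1, let β ∈ ℝ^p, set β̃_j = ⟨y − Xβ, x_j⟩ + β_j, and let β' be the vector obtained from β by replacing its j-th entry with T(β̃_j), where T(b) = sign(b)·(|b| − λ₁)/(1 + 2λ₂) if (|b| − λ₁)/(1 + 2λ₂) ≥ √(2λ₀/(1 + 2λ₂)) and T(b) = 0 otherwise. Then P(β') ≤ P(β). -/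
noncomputable section

/-!
Changing only the `j`-th coordinate, and using `‖x j‖ = 1`, the objective changes by
`g (β' j) - g (β j)` with `g t = (1 + 2λ₂)/2 t² - β̃ⱼ t + λ₁|t| + λ₀ [t ≠ 0]`, so it suffices that the
thresholded value minimizes `g`. Since `β̃ⱼ t ≤ |β̃ⱼ| |t|`, for `t ≠ 0` we have
`g t ≥ a/2 (|t| - w)² - a/2 w² + λ₀` with `a = 1 + 2λ₂`, `w = (|β̃ⱼ| - λ₁)/a`, with equality at
`t = sign β̃ⱼ · w`; this beats `g 0 = 0` exactly when `w ≥ √(2λ₀/a)`.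
-/

def coordObjective (a b l0 l1 t : ℝ) : ℝ :=
  a / 2 * t ^ 2 - b * t + l1 * |t| + l0 * if t = 0 then 0 else 1

def coordThreshold (a l0 l1 b : ℝ) : ℝ :=
  if Real.sqrt (2 * l0 / a) ≤ (|b| - l1) / a then Real.sign b * ((|b| - l1) / a) else 0

section CoordObjective

variable {a b l0 l1 : ℝ}

lemma radial_le_coordObjective (s : ℝ) :
    a / 2 * |s| ^ 2 - (|b| - l1) * |s| + l0 * (if s = 0 then 0 else 1) ≤
      coordObjective a b l0 l1 s := by
  have : b * s ≤ |b| * |s| := (le_abs_self _).trans (abs_mul b s).le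
  rw [coordObjective, sq_abs]
  linarith

lemma coordObjective_sign_mul (hb : b ≠ 0) {w : ℝ} (hw : 0 < w) :
    coordObjective a b l0 l1 (Real.sign b * w) = a / 2 * w ^ 2 - (|b| - l1) * w + l0 := by
  rcases hb.lt_or_gt with hb | hb
  · simp [coordObjective, Real.sign_of_neg hb, abs_of_neg hb, abs_of_pos hw, hw.ne']
    ring
  · simp [coordObjective, Real.sign_of_pos hb, abs_of_pos hb, abs_of_pos hw, hw.ne']
    ring

theorem coordObjective_coordThreshold_le (ha : 0 < a) (hl0 : 0 < l0) (hl1 : 0 ≤ l1) (s : ℝ) :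
    coordObjective a b l0 l1 (coordThreshold a l0 l1 b) ≤ coordObjective a b l0 l1 s := by
  set σ := Real.sqrt (2 * l0 / a)
  have hσ : 0 < σ := Real.sqrt_pos.mpr (by positivity)
  have haσ : a * σ ^ 2 = 2 * l0 := by
    rw [Real.sq_sqrt (by positivity)]; field_simp
  have hs := radial_le_coordObjective (a := a) (b := b) (l0 := l0) (l1 := l1) s
  have hs0 := abs_nonneg s
  unfold coordThreshold
  split_ifs with hc
  · set w := (|b| - l1) / a
    have haw : a * w = |b| - l1 := mul_div_cancel₀ _ ha.ne'
    have hw : 0 < w := hσ.trans_le hc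
    have hb : b ≠ 0 := by
      rintro rfl
      rw [abs_zero] at haw
      nlinarith
    rw [coordObjective_sign_mul hb hw, ← haw]
    have hσw : σ ^ 2 ≤ w ^ 2 := pow_le_pow_left₀ hσ.le hc 2
    by_cases h0 : s = 0
    · simp only [h0, if_true, abs_zero] at hs ⊢
      nlinarith
    · simp only [h0, if_false] at hs
      nlinarith [sq_nonneg (|s| - w)]
  · have hlt : |b| - l1 < a * σ := by
      rw [not_le, div_lt_iff₀ ha] at hc; linarith
    rw [show coordObjective a b l0 l1 0 = 0 by simp [coordObjective]]
    by_cases h0 : s = 0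
    · simp [h0, coordObjective]
    · simp only [h0, if_false] at hs
      nlinarith [mul_nonneg ha.le (sq_nonneg (|s| - σ))]

end CoordObjective

lemma sum_sub_sum_of_eq_off {ι M : Type*} [Fintype ι] [AddCommGroup M] {f g : ι → M} (j : ι)
    (h : ∀ i ≠ j, f i = g i) : ∑ i, f i - ∑ i, g i = f j - g j := by
  rw [← Finset.sum_sub_distrib]
  exact Fintype.sum_eq_single j fun i hi => by rw [h i hi, sub_self]

section CoordinateChange

variable {n p : ℕ} {β β' : EuclideanSpace ℝ (Fin p)} {j : Fin p}

lemma Xmul_sub_of_eq_off (x : Fin p → EuclideanSpace ℝ (Fin n)) (hβ' : ∀ i ≠ j, β' i = β i) :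
    Xmul x β' - Xmul x β = (β' j - β j) • x j := by
  rw [Xmul, Xmul, sum_sub_sum_of_eq_off j fun i hi => by rw [hβ' i hi], sub_smul]

lemma zeroNorm_sub_of_eq_off (hβ' : ∀ i ≠ j, β' i = β i) :
    zeroNorm β' - zeroNorm β = (if β' j = 0 then 0 else 1) - (if β j = 0 then 0 else 1) := by
  simp only [zeroNorm, Finset.card_filter, Nat.cast_sum, Nat.cast_ite, Nat.cast_one, Nat.cast_zero]
  rw [sum_sub_sum_of_eq_off j fun i hi => by rw [hβ' i hi]]
  by_cases h' : β' j = 0 <;> by_cases h : β j = 0 <;> simp [h, h']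

lemma oneNorm_sub_of_eq_off (hβ' : ∀ i ≠ j, β' i = β i) :
    oneNorm β' - oneNorm β = |β' j| - |β j| :=
  sum_sub_sum_of_eq_off j fun i hi => by rw [hβ' i hi]

lemma norm_sq_sub_of_eq_off (hβ' : ∀ i ≠ j, β' i = β i) :
    ‖β'‖ ^ 2 - ‖β‖ ^ 2 = β' j ^ 2 - β j ^ 2 := by
  rw [EuclideanSpace.real_norm_sq_eq, EuclideanSpace.real_norm_sq_eq]
  exact sum_sub_sum_of_eq_off j fun i hi => by rw [hβ' i hi]

lemma Pobj_sub_of_eq_off (x : Fin p → EuclideanSpace ℝ (Fin n)) (y : EuclideanSpace ℝ (Fin n))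
    (l0 l1 l2 : ℝ) (hxj : ‖x j‖ = 1) (hβ' : ∀ i ≠ j, β' i = β i) :
    Pobj x y l0 l1 l2 β' - Pobj x y l0 l1 l2 β =
      coordObjective (1 + 2 * l2) (inner ℝ (y - Xmul x β) (x j) + β j) l0 l1 (β' j) -
        coordObjective (1 + 2 * l2) (inner ℝ (y - Xmul x β) (x j) + β j) l0 l1 (β j) := by
  have hres : y - Xmul x β' = (y - Xmul x β) - (β' j - β j) • x j := by
    rw [← Xmul_sub_of_eq_off x hβ']; abel
  have hloss : ‖y - Xmul x β'‖ ^ 2 = ‖y - Xmul x β‖ ^ 2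
      - 2 * ((β' j - β j) * inner ℝ (y - Xmul x β) (x j)) + (β' j - β j) ^ 2 := by
    rw [hres, norm_sub_sq_real, real_inner_smul_right, norm_smul, hxj, Real.norm_eq_abs,
      mul_one, sq_abs]
  have h0 := zeroNorm_sub_of_eq_off hβ'
  have h1 := oneNorm_sub_of_eq_off hβ'
  have h2 := norm_sq_sub_of_eq_off hβ'
  simp only [Pobj, coordObjective]
  rw [hloss]
  linear_combination l0 * h0 + l1 * h1 + l2 * h2

end CoordinateChange

/-- a coordinate-descent step never increases the primal objective. -/
theorem stmt17 (n p : ℕ) (x : Fin p → EuclideanSpace ℝ (Fin n))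
    (y : EuclideanSpace ℝ (Fin n)) (l0 l1 l2 : ℝ)
    (hl0 : 0 < l0) (hl1 : 0 ≤ l1) (hl2 : 0 < l2)
    (j : Fin p) (hxj : ‖x j‖ = 1)
    (β : EuclideanSpace ℝ (Fin p))
    (βt : ℝ) (hβt : βt = (inner ℝ (y - Xmul x β) (x j) : ℝ) + β j)
    (T : ℝ)
    (hT : T = if Real.sqrt (2 * l0 / (1 + 2 * l2)) ≤ (|βt| - l1) / (1 + 2 * l2)
        then Real.sign βt * ((|βt| - l1) / (1 + 2 * l2)) else 0)
    (β' : EuclideanSpace ℝ (Fin p)) (hβ' : ∀ i : Fin p, β' i = if i = j then T else β i) :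
    Pobj x y l0 l1 l2 β' ≤ Pobj x y l0 l1 l2 β := by
  have hoff : ∀ i ≠ j, β' i = β i := fun i hi => by simp [hβ' i, hi]
  have hβ'j : β' j = coordThreshold (1 + 2 * l2) l0 l1 βt := by rw [hβ' j, if_pos rfl, hT]; rfl
  have hdiff := Pobj_sub_of_eq_off x y l0 l1 l2 hxj hoff
  rw [← hβt, hβ'j] at hdiff
  have hmin := coordObjective_coordThreshold_le (a := 1 + 2 * l2) (b := βt) (by positivity) hl0 hl1
    (β j)
  linarith
end
end
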